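/- arXiv:1110.6347 — 5 statements merged into one kernel-verified Lean document; each statement's English description precedes it below -/
import Mathlib

section
/- Let n ≥ 1, C > 0 and d > 0. If A is an n×n real symmetric positive definite matrix with |A i j| ≤ C for all i, j and det A ≥ d, then every vector v ∈ ℝⁿ with vᵀ A v ≤ 1 satisfies ‖v‖² ≤ n! · C^(n−1) / d (Euclidean norm). -/
/-!
Write `B = A⁻¹`. Cauchy–Schwarz for the positive form of `B`, applied to `v` and `A v`, gives
`|v|⁴ ≤ (vᵀ B v)(vᵀ A v)`, and `vᵀ B v ≤ tr B · |v|²`; hence `|v|² ≤ tr B · vᵀ A v ≤ tr B`.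
By Cramer's rule `B i i` is a principal `(n-1)`-minor of `A` divided by `det A`, and each such
minor is at most `(n-1)! C^(n-1)` by the Leibniz expansion, so `tr B ≤ n! C^(n-1) / d`.
-/

open Matrix Finset
open scoped Nat

namespace Matrix

variable {ι : Type*} [Fintype ι] [DecidableEq ι]

theorem PosSemidef.dotProduct_mulVec_sq_le {M : Matrix ι ι ℝ} (hM : M.PosSemidef) (x y : ι → ℝ) :
    (x ⬝ᵥ M *ᵥ y) ^ 2 ≤ (x ⬝ᵥ M *ᵥ x) * (y ⬝ᵥ M *ᵥ y) := by
  have h := (toBilin' M).apply_mul_apply_le_of_forall_zero_le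
    (fun z => by simpa only [toBilin'_apply', star_trivial] using hM.dotProduct_mulVec_nonneg z) x y
  have hsymm : y ⬝ᵥ M *ᵥ x = x ⬝ᵥ M *ᵥ y := by
    rw [dotProduct_mulVec, ← mulVec_transpose, dotProduct_comm,
      isHermitian_iff_isSymm.mp hM.isHermitian]
  simpa only [toBilin'_apply', hsymm, sq] using h

theorem PosSemidef.dotProduct_mulVec_le_trace_mul {M : Matrix ι ι ℝ} (hM : M.PosSemidef)
    (x : ι → ℝ) : x ⬝ᵥ M *ᵥ x ≤ M.trace * (x ⬝ᵥ x) := by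
  set q := x ⬝ᵥ M *ᵥ x
  have hq : 0 ≤ q := by simpa using hM.dotProduct_mulVec_nonneg x
  have hentry (i : ι) : (M *ᵥ x) i ^ 2 ≤ M i i * q := by
    simpa [single_one_dotProduct, mulVec_single_one] using
      hM.dotProduct_mulVec_sq_le (Pi.single i 1) x
  have : q ^ 2 ≤ q * (M.trace * (x ⬝ᵥ x)) := calc
    q ^ 2 ≤ (∑ i, x i ^ 2) * ∑ i, (M *ᵥ x) i ^ 2 := sum_mul_sq_le_sq_mul_sq _ _ _
    _ ≤ (∑ i, x i ^ 2) * ∑ i, M i i * q := by gcongr with i; exact hentry i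
    _ = q * (M.trace * (x ⬝ᵥ x)) := by
      simp only [← sum_mul, trace, diag, dotProduct, sq]; ring
  have hx : 0 ≤ x ⬝ᵥ x := by simpa using dotProduct_star_self_nonneg x
  nlinarith [mul_nonneg hM.trace_nonneg hx]

theorem PosDef.dotProduct_self_le_trace_inv_mul {A : Matrix ι ι ℝ} (hA : A.PosDef) (v : ι → ℝ) :
    v ⬝ᵥ v ≤ A⁻¹.trace * (v ⬝ᵥ A *ᵥ v) := by
  have hB : A⁻¹.PosSemidef := hA.inv.posSemidef
  have hv : A⁻¹ *ᵥ (A *ᵥ v) = v := by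
    rw [mulVec_mulVec, nonsing_inv_mul _ (isUnit_iff_ne_zero.mpr hA.det_pos.ne'), one_mulVec]
  have hq : 0 ≤ v ⬝ᵥ A *ᵥ v := by simpa using hA.posSemidef.dotProduct_mulVec_nonneg v
  have : (v ⬝ᵥ v) ^ 2 ≤ (v ⬝ᵥ v) * (A⁻¹.trace * (v ⬝ᵥ A *ᵥ v)) := calc
    (v ⬝ᵥ v) ^ 2 = (v ⬝ᵥ A⁻¹ *ᵥ (A *ᵥ v)) ^ 2 := by rw [hv]
    _ ≤ (v ⬝ᵥ A⁻¹ *ᵥ v) * ((A *ᵥ v) ⬝ᵥ A⁻¹ *ᵥ (A *ᵥ v)) := hB.dotProduct_mulVec_sq_le _ _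
    _ ≤ (A⁻¹.trace * (v ⬝ᵥ v)) * (v ⬝ᵥ A *ᵥ v) := by
      rw [hv, dotProduct_comm (A *ᵥ v) v]
      exact mul_le_mul_of_nonneg_right (hB.dotProduct_mulVec_le_trace_mul v) hq
    _ = (v ⬝ᵥ v) * (A⁻¹.trace * (v ⬝ᵥ A *ᵥ v)) := by ring
  nlinarith [mul_nonneg hB.trace_nonneg hq]

section Field

variable {K : Type*} [Field K]

theorem inv_apply_self_fin_succ {m : ℕ} (A : Matrix (Fin (m + 1)) (Fin (m + 1)) K)
    (i : Fin (m + 1)) :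
    A⁻¹ i i = (A.submatrix i.succAbove i.succAbove).det / A.det := by
  rw [inv_def, Ring.inverse_eq_inv', smul_apply, adjugate_fin_succ_eq_det_submatrix,
    Even.neg_one_pow ⟨i, rfl⟩, one_mul, smul_eq_mul, inv_mul_eq_div]

theorem trace_inv_le_of_abs_le [LinearOrder K] [IsStrictOrderedRing K] {n : ℕ}
    (A : Matrix (Fin n) (Fin n) K) (hdet : 0 ≤ A.det) {C : K} (hA : ∀ i j, |A i j| ≤ C) :
    A⁻¹.trace ≤ n ! * C ^ (n - 1) / A.det := by
  cases n with
  | zero => simp [trace]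
  | succ m =>
    have hminor (i : Fin (m + 1)) : (A.submatrix i.succAbove i.succAbove).det ≤ m ! * C ^ m := by
      have := det_le (A := A.submatrix i.succAbove i.succAbove) (abv := AbsoluteValue.abs)
        fun j k => hA (i.succAbove j) (i.succAbove k)
      simp only [AbsoluteValue.abs_apply, Fintype.card_fin, nsmul_eq_mul] at this
      exact (le_abs_self _).trans this
    calc A⁻¹.trace = ∑ i : Fin (m + 1), (A.submatrix i.succAbove i.succAbove).det / A.det := by
          simp only [trace, diag, inv_apply_self_fin_succ]
      _ ≤ ∑ _i : Fin (m + 1), m ! * C ^ m / A.det := by gcongr with i; exact hminor i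
      _ = (m + 1)! * C ^ (m + 1 - 1) / A.det := by
          simp only [sum_const, card_univ, Fintype.card_fin, nsmul_eq_mul, Nat.factorial_succ,
            Nat.add_sub_cancel]
          push_cast; ring

end Field

end Matrix

theorem unit_vectors_bound_general (n : ℕ) (C d : ℝ) (hC : 0 < C) (hd : 0 < d)
    (A : Matrix (Fin n) (Fin n) ℝ)
    (hpos : A.PosDef)
    (hA : ∀ i j, |A i j| ≤ C) (hdet : d ≤ A.det)
    (v : Fin n → ℝ) (hv : v ⬝ᵥ A.mulVec v ≤ 1) :
    ∑ i, (v i) ^ 2 ≤ (Nat.factorial n : ℝ) * C ^ (n - 1) / d := by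
  have hinv : 0 ≤ A⁻¹.trace := hpos.inv.posSemidef.trace_nonneg
  calc ∑ i, (v i) ^ 2 = v ⬝ᵥ v := by simp only [dotProduct, sq]
    _ ≤ A⁻¹.trace * (v ⬝ᵥ A *ᵥ v) := hpos.dotProduct_self_le_trace_inv_mul v
    _ ≤ A⁻¹.trace := mul_le_of_le_one_right hinv hv
    _ ≤ n ! * C ^ (n - 1) / A.det := trace_inv_le_of_abs_le A hpos.det_pos.le hA
    _ ≤ n ! * C ^ (n - 1) / d := by gcongr

/-- If `A` is a symmetric positive definite `n × n` real matrix with entries bounded by `C`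
and `det A ≥ d > 0`, then every vector `v` with `vᵀ A v ≤ 1` has Euclidean norm squared
at most `n! · C^(n-1) / d`. -/
theorem unit_vectors_bound (n : ℕ) (hn : 1 ≤ n) (C d : ℝ) (hC : 0 < C) (hd : 0 < d)
    (A : Matrix (Fin n) (Fin n) ℝ)
    (hsymm : A.IsSymm) (hpos : A.PosDef)
    (hA : ∀ i j, |A i j| ≤ C) (hdet : d ≤ A.det)
    (v : Fin n → ℝ) (hv : v ⬝ᵥ A.mulVec v ≤ 1) :
    ∑ i, (v i) ^ 2 ≤ (Nat.factorial n : ℝ) * C ^ (n - 1) / d :=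
  unit_vectors_bound_general n C d hC hd A hpos hA hdet v hv
end

section
/- Let X be a topological space and C ⊆ X. Let h : X × [0,1] → X be a continuous map with h(x,0) = x and h(x,1) ∈ C for all x ∈ X, and h(c,t) = c for all c ∈ C and all t ∈ [0,1] (a strong deformation retraction of X onto C). Let B ⊆ C and let V ⊆ X be open with B ⊆ V. Suppose there exist a set W with B ⊆ W ⊆ C ∩ V which is open in the subspace topology of C, and a continuous map f : W × [0,1] → V with f(w,0) = w and f(w,1) ∈ B for all w ∈ W, and f(b,t) = b for all b ∈ B and t ∈ [0,1]. Then there exist an open set U ⊆ X with B ⊆ U ⊆ V and a continuous map g : U × [0,1] → V with g(x,0) = x and g(x,1) ∈ B for all x ∈ U, and g(b,t) = b for all b ∈ B and all t ∈ [0,1]. -/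
/-!
Take `U` to be the points `x` whose `h`-track stays in `V` and ends in `W`; it is open because
`I` is compact, and it contains `B` because `h` fixes `C`. On `U`, first run `h` to land at
`h (x, 1) ∈ W`, then run `f` from there into `B`.
-/

open unitInterval

open Set

theorem isOpen_setOf_forall_apply_mem {X K Y : Type*} [TopologicalSpace X] [TopologicalSpace K]
    [TopologicalSpace Y] [CompactSpace K] {h : X × K → Y} (hh : Continuous h) {V : Set Y}
    (hV : IsOpen V) : IsOpen {x | ∀ t, h (x, t) ∈ V} := by
  have hcompl : {x | ∀ t, h (x, t) ∈ V}ᶜ = Prod.fst '' (h ⁻¹' Vᶜ) := by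
    ext x
    simp
  rw [← isClosed_compl_iff, hcompl]
  exact isClosedMap_fst_of_compactSpace _ (hV.isClosed_compl.preimage hh)

section HomotopyTrans

variable {X Y : Type*}

noncomputable def homotopyTrans (F G : X × I → Y) (p : X × I) : Y :=
  if (p.2 : ℝ) ≤ 1 / 2 then F (p.1, projIcc 0 1 zero_le_one (2 * p.2))
  else G (p.1, projIcc 0 1 zero_le_one (2 * p.2 - 1))

variable (F G : X × I → Y)

@[simp]
theorem homotopyTrans_zero (x : X) : homotopyTrans F G (x, 0) = F (x, 0) := by
  norm_num [homotopyTrans]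

@[simp]
theorem homotopyTrans_one (x : X) : homotopyTrans F G (x, 1) = G (x, 1) := by
  norm_num [homotopyTrans]

theorem homotopyTrans_mem {S : Set Y} {x : X} (hF : ∀ t, F (x, t) ∈ S)
    (hG : ∀ t, G (x, t) ∈ S) (t : I) : homotopyTrans F G (x, t) ∈ S := by
  unfold homotopyTrans
  split_ifs
  exacts [hF _, hG _]

variable [TopologicalSpace X] [TopologicalSpace Y]

theorem ContinuousOn.homotopyTrans {s : Set X} {F G : X × I → Y}
    (hF : ContinuousOn F (s ×ˢ univ)) (hG : ContinuousOn G (s ×ˢ univ))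
    (hFG : ∀ x ∈ s, F (x, 1) = G (x, 0)) : ContinuousOn (homotopyTrans F G) (s ×ˢ univ) := by
  have hmaps (r : X × I → I) : MapsTo (fun p => (p.1, r p)) (s ×ˢ univ) (s ×ˢ univ) :=
    fun p hp => ⟨hp.1, mem_univ _⟩
  refine ContinuousOn.if ?_ ((hF.comp (by fun_prop) (hmaps _)).mono inter_subset_left)
    ((hG.comp (by fun_prop) (hmaps _)).mono inter_subset_left)
  rintro ⟨x, t⟩ ⟨⟨hx, -⟩, hfr⟩
  have ht : (t : ℝ) = 1 / 2 :=
    frontier_le_subset_eq (f := fun p : X × I => (p.2 : ℝ)) (by fun_prop) continuous_const hfr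
  norm_num [ht]
  exact hFG x hx

end HomotopyTrans

theorem nbhd_deformation_retract_general {X : Type*} [TopologicalSpace X]
    (C B V : Set X) (hBC : B ⊆ C) (hVopen : IsOpen V) (hBV : B ⊆ V)
    (h : X × I → X) (hcont : Continuous h)
    (h0 : ∀ x, h (x, 0) = x) (h1 : ∀ x, h (x, 1) ∈ C)
    (hfix : ∀ c ∈ C, ∀ t, h (c, t) = c)
    (W : Set X) (hBW : B ⊆ W)
    (hWopen : IsOpen ((Subtype.val : C → X) ⁻¹' W))
    (f : X × I → X) (hfcont : ContinuousOn f (W ×ˢ (Set.univ : Set I)))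
    (hfV : ∀ w ∈ W, ∀ t, f (w, t) ∈ V)
    (hf0 : ∀ w ∈ W, f (w, 0) = w) (hf1 : ∀ w ∈ W, f (w, 1) ∈ B)
    (hfB : ∀ b ∈ B, ∀ t, f (b, t) = b) :
    ∃ U : Set X, IsOpen U ∧ B ⊆ U ∧ U ⊆ V ∧
      ∃ g : X × I → X, ContinuousOn g (U ×ˢ (Set.univ : Set I)) ∧
        (∀ x ∈ U, g (x, 0) = x) ∧ (∀ x ∈ U, g (x, 1) ∈ B) ∧
        (∀ x ∈ U, ∀ t, g (x, t) ∈ V) ∧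
        (∀ b ∈ B, ∀ t, g (b, t) = b) := by
  have hfixB : ∀ b ∈ B, ∀ t, h (b, t) = b := fun b hb => hfix b (hBC hb)
  let U : Set X := {x | h (x, 1) ∈ W ∧ ∀ t, h (x, t) ∈ V}
  have hend : Continuous fun x => h (x, 1) := hcont.comp (by fun_prop)
  have hUopen : IsOpen U :=
    (hWopen.preimage (hend.codRestrict h1)).inter (isOpen_setOf_forall_apply_mem hcont hVopen)
  have hBU : B ⊆ U := fun b hb => ⟨by rw [hfixB b hb]; exact hBW hb, fun t => by
    rw [hfixB b hb]; exact hBV hb⟩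
  have hUV : U ⊆ V := fun x hx => h0 x ▸ hx.2 0
  let f' : X × I → X := fun p => f (h (p.1, 1), p.2)
  have hf'cont : ContinuousOn f' (U ×ˢ univ) :=
    hfcont.comp (by fun_prop : Continuous fun p : X × I => (h (p.1, 1), p.2)).continuousOn
      fun p hp => ⟨hp.1.1, mem_univ _⟩
  refine ⟨U, hUopen, hBU, hUV, homotopyTrans h f',
    hcont.continuousOn.homotopyTrans hf'cont fun x hx => (hf0 _ hx.1).symm,
    fun x _ => by simp [h0], fun x hx => by simpa using hf1 _ hx.1,
    fun x hx => homotopyTrans_mem _ _ hx.2 (hfV _ hx.1), fun b hb t => ?_⟩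
  refine homotopyTrans_mem (S := {b}) _ _ (hfixB b hb) (fun t => ?_) t
  simp [f', hfixB b hb, hfB b hb]

/-- Proposition 1.11 of the paper, in abstract form.  If `h` is a strong deformation
retraction of `X` onto `C`, `B ⊆ C`, `V` is an open neighborhood of `B`, and some
relatively open neighborhood `W` of `B` in `C` deformation retracts to `B` inside `V`,
then there is an open neighborhood `U` of `B` in `X` with `U ⊆ V` which deformation
retracts to `B` inside `V`. -/
theorem nbhd_deformation_retract {X : Type*} [TopologicalSpace X]
    (C B V : Set X) (hBC : B ⊆ C) (hVopen : IsOpen V) (hBV : B ⊆ V)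
    (h : X × I → X) (hcont : Continuous h)
    (h0 : ∀ x, h (x, 0) = x) (h1 : ∀ x, h (x, 1) ∈ C)
    (hfix : ∀ c ∈ C, ∀ t, h (c, t) = c)
    (W : Set X) (hBW : B ⊆ W) (hWCV : W ⊆ C ∩ V)
    (hWopen : IsOpen ((Subtype.val : C → X) ⁻¹' W))
    (f : X × I → X) (hfcont : ContinuousOn f (W ×ˢ (Set.univ : Set I)))
    (hfV : ∀ w ∈ W, ∀ t, f (w, t) ∈ V)
    (hf0 : ∀ w ∈ W, f (w, 0) = w) (hf1 : ∀ w ∈ W, f (w, 1) ∈ B)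
    (hfB : ∀ b ∈ B, ∀ t, f (b, t) = b) :
    ∃ U : Set X, IsOpen U ∧ B ⊆ U ∧ U ⊆ V ∧
      ∃ g : X × I → X, ContinuousOn g (U ×ˢ (Set.univ : Set I)) ∧
        (∀ x ∈ U, g (x, 0) = x) ∧ (∀ x ∈ U, g (x, 1) ∈ B) ∧
        (∀ x ∈ U, ∀ t, g (x, t) ∈ V) ∧
        (∀ b ∈ B, ∀ t, g (b, t) = b) :=
  nbhd_deformation_retract_general C B V hBC hVopen hBV h hcont h0 h1 hfix W hBW hWopen f hfcont hfV
    hf0 hf1 hfB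
end

section
/- Let N be a nonempty compact Hausdorff topological space, let I = [0,1], let k ≥ 1, and let D ⊆ ℝᵏ be the closed unit ball with boundary sphere S. Suppose β, β̄ : D → C(N × I, N × I) are continuous maps into the space of continuous self-maps of N × I with the compact-open topology, such that for every u ∈ D: (i) β̄(u) ∘ β(u) = id_{N×I} and β(u) ∘ β̄(u) = id_{N×I} (so each β(u) is a homeomorphism of N × I), (ii) both β(u) and β̄(u) map N × {0} into N × {0}, and (iii) for every u ∈ S and every x ∈ N, β(u)(x,0) = (x,0). Then there exist continuous maps β', β̄' : D → C(N × I, N × I) such that for every u ∈ D: β̄'(u) ∘ β'(u) = id_{N×I} and β'(u) ∘ β̄'(u) = id_{N×I}; β'(u)(x,0) = (x,0) for every x ∈ N; and β'(u) = β(u) for every u ∈ S. -/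
open unitInterval

/-! Straighten the bottom: if a homeomorphism `f` of `X × Y` preserves `X × {y₀}`, with
restriction `f₀` there, then `(f₀⁻¹ × id) ∘ f` (with `f₀⁻¹` the restriction of `f⁻¹`) is the
identity on the bottom, has inverse `f⁻¹ ∘ (f₀ × id)`, equals `f` when `f₀ = id`, and depends
continuously on `(f, f⁻¹)`, since composition is continuous in the compact-open topology when
`X × Y` is locally compact. -/

namespace ContinuousMap

variable {X Y : Type*} [TopologicalSpace X] [TopologicalSpace Y] (y₀ : Y)

/-- `f₀ × id`, where `f₀ x = (f (x, y₀)).1` is the restriction of `f` to the bottom. -/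
def bottomProdId (f : C(X × Y, X × Y)) : C(X × Y, X × Y) :=
  ⟨fun p => ((f (p.1, y₀)).1, p.2), by fun_prop⟩

@[simp]
theorem bottomProdId_apply (f : C(X × Y, X × Y)) (p : X × Y) :
    bottomProdId y₀ f p = ((f (p.1, y₀)).1, p.2) := rfl

theorem continuous_bottomProdId [LocallyCompactSpace (X × Y)] :
    Continuous (bottomProdId y₀ : C(X × Y, X × Y) → C(X × Y, X × Y)) := by
  refine continuous_of_continuous_uncurry _ ?_
  simp only [bottomProdId_apply]
  fun_prop

variable {y₀} {f g : C(X × Y, X × Y)}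

theorem bottomProdId_comp_bottomProdId (hfg : f.comp g = ContinuousMap.id _)
    (hg : ∀ x, (g (x, y₀)).2 = y₀) :
    (bottomProdId y₀ f).comp (bottomProdId y₀ g) = ContinuousMap.id _ := by
  ext1 ⟨x, y⟩
  have hg' : ((g (x, y₀)).1, y₀) = g (x, y₀) := Prod.ext rfl (hg x).symm
  simp only [comp_apply, bottomProdId_apply, hg', ← comp_apply (f := f), hfg, id_apply]

theorem bottomProdId_eq_id (hg : ∀ x, g (x, y₀) = (x, y₀)) :
    bottomProdId y₀ g = ContinuousMap.id _ := by
  ext1 ⟨x, y⟩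
  simp [hg]

theorem comp_bottomProdId_comp_bottomProdId_comp (hgf : g.comp f = ContinuousMap.id _)
    (hfg : f.comp g = ContinuousMap.id _) (hg : ∀ x, (g (x, y₀)).2 = y₀) :
    (g.comp (bottomProdId y₀ f)).comp ((bottomProdId y₀ g).comp f) = ContinuousMap.id _ := by
  rw [comp_assoc, ← comp_assoc (bottomProdId y₀ f), bottomProdId_comp_bottomProdId hfg hg,
    id_comp, hgf]

theorem bottomProdId_comp_comp_comp_bottomProdId (hgf : g.comp f = ContinuousMap.id _)
    (hfg : f.comp g = ContinuousMap.id _) (hf : ∀ x, (f (x, y₀)).2 = y₀) :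
    ((bottomProdId y₀ g).comp f).comp (g.comp (bottomProdId y₀ f)) = ContinuousMap.id _ := by
  rw [comp_assoc, ← comp_assoc f, hfg, id_comp, bottomProdId_comp_bottomProdId hgf hf]

theorem bottomProdId_comp_apply_bottom (hgf : g.comp f = ContinuousMap.id _)
    (hf : ∀ x, (f (x, y₀)).2 = y₀) (x : X) :
    (bottomProdId y₀ g).comp f (x, y₀) = (x, y₀) := by
  have hf' : ((f (x, y₀)).1, y₀) = f (x, y₀) := Prod.ext rfl (hf x).symm
  simp only [comp_apply, bottomProdId_apply, hf', ← comp_apply (f := g), hgf, id_apply]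
  exact Prod.ext rfl (hf x)

theorem bottomProdId_comp_eq_self (hgf : g.comp f = ContinuousMap.id _)
    (hf : ∀ x, f (x, y₀) = (x, y₀)) : (bottomProdId y₀ g).comp f = f := by
  have hg (x : X) : g (x, y₀) = (x, y₀) := by
    conv_lhs => rw [← hf x]
    rw [← comp_apply, hgf, id_apply]
  rw [bottomProdId_eq_id hg, id_comp]

end ContinuousMap

theorem pseudoisotopy_pi_k_injective_general
    {N : Type*} [TopologicalSpace N] [CompactSpace N] [T2Space N]
    (k : ℕ)
    (β βbar : (Metric.closedBall (0 : EuclideanSpace ℝ (Fin k)) 1) → C(N × I, N × I))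
    (hβ : Continuous β) (hβbar : Continuous βbar)
    (hinv : ∀ u, (βbar u).comp (β u) = ContinuousMap.id (N × I) ∧
                 (β u).comp (βbar u) = ContinuousMap.id (N × I))
    (hbot : ∀ u (x : N), (β u (x, 0)).2 = 0 ∧ (βbar u (x, 0)).2 = 0)
    (hsphere : ∀ u, u.val ∈ Metric.sphere (0 : EuclideanSpace ℝ (Fin k)) 1 →
      ∀ x : N, β u (x, 0) = (x, 0)) :
    ∃ β' βbar' : (Metric.closedBall (0 : EuclideanSpace ℝ (Fin k)) 1) → C(N × I, N × I),
      Continuous β' ∧ Continuous βbar' ∧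
      (∀ u, (βbar' u).comp (β' u) = ContinuousMap.id (N × I) ∧
            (β' u).comp (βbar' u) = ContinuousMap.id (N × I)) ∧
      (∀ u (x : N), β' u (x, 0) = (x, 0)) ∧
      (∀ u, u.val ∈ Metric.sphere (0 : EuclideanSpace ℝ (Fin k)) 1 →
        β' u = β u) := by
  open ContinuousMap in
  refine ⟨fun u => (bottomProdId 0 (βbar u)).comp (β u),
    fun u => (βbar u).comp (bottomProdId 0 (β u)), ?_, ?_, fun u => ⟨?_, ?_⟩,
    fun u => bottomProdId_comp_apply_bottom (hinv u).1 fun x => (hbot u x).1,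
    fun u hu => bottomProdId_comp_eq_self (hinv u).1 (hsphere u hu)⟩
  · exact continuous_comp'.comp (hβ.prodMk ((continuous_bottomProdId 0).comp hβbar))
  · exact continuous_comp'.comp (((continuous_bottomProdId 0).comp hβ).prodMk hβbar)
  · exact comp_bottomProdId_comp_bottomProdId_comp (hinv u).1 (hinv u).2 fun x => (hbot u x).2
  · exact bottomProdId_comp_comp_comp_bottomProdId (hinv u).1 (hinv u).2 fun x => (hbot u x).1

/-- Lemma 2.1 of the paper, as a relative lifting property: given a disc `D = 𝔻ᵏ` of
homeomorphisms of `N × I` preserving the bottom `N × {0}`, which over the boundary sphere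
consists of pseudoisotopies (maps restricting to the identity on `N × {0}`), one can
replace it by a disc of pseudoisotopies agreeing with the original family over the
boundary sphere.  This expresses injectivity of `π_k P(N) → π_k TOP(N × I)`. -/
theorem pseudoisotopy_pi_k_injective
    {N : Type*} [TopologicalSpace N] [CompactSpace N] [T2Space N] [Nonempty N]
    (k : ℕ) (hk : 1 ≤ k)
    (β βbar : (Metric.closedBall (0 : EuclideanSpace ℝ (Fin k)) 1) → C(N × I, N × I))
    (hβ : Continuous β) (hβbar : Continuous βbar)
    (hinv : ∀ u, (βbar u).comp (β u) = ContinuousMap.id (N × I) ∧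
                 (β u).comp (βbar u) = ContinuousMap.id (N × I))
    (hbot : ∀ u (x : N), (β u (x, 0)).2 = 0 ∧ (βbar u (x, 0)).2 = 0)
    (hsphere : ∀ u, u.val ∈ Metric.sphere (0 : EuclideanSpace ℝ (Fin k)) 1 →
      ∀ x : N, β u (x, 0) = (x, 0)) :
    ∃ β' βbar' : (Metric.closedBall (0 : EuclideanSpace ℝ (Fin k)) 1) → C(N × I, N × I),
      Continuous β' ∧ Continuous βbar' ∧
      (∀ u, (βbar' u).comp (β' u) = ContinuousMap.id (N × I) ∧
            (β' u).comp (βbar' u) = ContinuousMap.id (N × I)) ∧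
      (∀ u (x : N), β' u (x, 0) = (x, 0)) ∧
      (∀ u, u.val ∈ Metric.sphere (0 : EuclideanSpace ℝ (Fin k)) 1 →
        β' u = β u) :=
  pseudoisotopy_pi_k_injective_general k β βbar hβ hβbar hinv hbot hsphere
end

section
/- Let δ > 0. Let f : ℝ → ℝ be a C² function with f(x) = 1 for all x ∈ [−1,1], f''(x) > 0 for all x with |x| > 1, and f''(x) ≥ δ for all x with |x| ≥ 2. Let α : ℝ × ℝ → ℝ be a C² function such that α(x,s) = 0 whenever |x| ≥ 4 (for all s), and ∂²α/∂x²(x,s) > 0 whenever |x| ≤ 3 and |s| ≤ 1. For t > 0 define f_t : ℝ → ℝ by f_t(x) = f(x) + exp(−1/t) · α(x, sin(1/t)). Then there exists t₀ ∈ (0,1] such that for every t ∈ (0, t₀] and every x ∈ ℝ, f_t''(x) ≥ 0. -/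
/-!
On `|x| ≤ 3` both `f''` and `exp (-1/t) · ∂²α/∂x²(·, sin (1/t))` are nonnegative
(`f'' = 0` on `[-1, 1]` by continuity). On `|x| > 3`
we have `f'' ≥ δ`, while `∂²α/∂x²` is bounded on `ℝ × [-1, 1]` (it is jointly continuous and
vanishes for `|x| > 4`), so the perturbation is at most `exp (-1/t) · M < δ` for small `t`.
-/

open Filter Set Topology

lemma deriv_slice_eq_fderiv {F : ℝ × ℝ → ℝ} (hF : Differentiable ℝ F) (x s : ℝ) :
    deriv (fun y => F (y, s)) x = fderiv ℝ F (x, s) (1, 0) :=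
  ((hF (x, s)).hasFDerivAt.comp_hasDerivAt x
    ((hasDerivAt_id x).prodMk (hasDerivAt_const x s))).deriv

lemma continuous_deriv_deriv_slice {F : ℝ × ℝ → ℝ} (hF : ContDiff ℝ 2 F) :
    Continuous fun p : ℝ × ℝ => deriv (deriv fun y => F (y, p.2)) p.1 := by
  set F₁ : ℝ × ℝ → ℝ := fun p => fderiv ℝ F p (1, 0)
  have hF₁ : ContDiff ℝ 1 F₁ := (hF.fderiv_right (by norm_num)).clm_apply contDiff_const
  have hderiv : ∀ s, deriv (fun y => F (y, s)) = fun y => F₁ (y, s) := fun s =>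
    funext fun y => deriv_slice_eq_fderiv (hF.differentiable (by norm_num)) y s
  simp only [hderiv, deriv_slice_eq_fderiv (hF₁.differentiable one_ne_zero)]
  exact ((hF₁.fderiv_right (m := 0) le_rfl).clm_apply contDiff_const).continuous

lemma deriv_deriv_eq_zero_of_eventuallyEq_const {g : ℝ → ℝ} {x c : ℝ}
    (h : g =ᶠ[𝓝 x] fun _ => c) : deriv (deriv g) x = 0 := by
  rw [h.deriv.deriv_eq]
  simp

lemma eqOn_deriv_deriv_zero_of_eqOn_const {f : ℝ → ℝ} (hf : ContDiff ℝ 2 f) {a b c : ℝ}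
    (hab : a < b) (hc : ∀ x ∈ Icc a b, f x = c) : EqOn (deriv (deriv f)) 0 (Icc a b) := by
  have hIoo : EqOn (deriv (deriv f)) 0 (Ioo a b) := fun x hx =>
    deriv_deriv_eq_zero_of_eventuallyEq_const (c := c) <|
      eventually_of_mem (Ioo_mem_nhds hx.1 hx.2) fun y hy => hc y (Ioo_subset_Icc_self hy)
  have hcont : Continuous (deriv (deriv f)) := (hf.deriv' (n := 1)).continuous_deriv_one
  exact hIoo.of_subset_closure hcont.continuousOn continuousOn_const Ioo_subset_Icc_self
    (closure_Ioo hab.ne).ge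

lemma exists_abs_deriv_deriv_slice_le {F : ℝ × ℝ → ℝ} (hF : ContDiff ℝ 2 F) {R : ℝ}
    (hR : ∀ x s, R ≤ |x| → F (x, s) = 0) {S : Set ℝ} (hS : IsCompact S) :
    ∃ M, ∀ x, ∀ s ∈ S, |deriv (deriv fun y => F (y, s)) x| ≤ M := by
  obtain ⟨M, hM⟩ := (isCompact_Icc.prod hS).exists_bound_of_continuousOn
    (continuous_deriv_deriv_slice hF).continuousOn
  refine ⟨max M 0, fun x s hs => ?_⟩
  rcases le_or_gt |x| R with hx | hx
  · exact le_max_of_le_left (hM (x, s) ⟨abs_le.mp hx, hs⟩)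
  · have hzero : (fun y => F (y, s)) =ᶠ[𝓝 x] fun _ => 0 :=
      eventually_of_mem ((isOpen_lt continuous_const continuous_abs).mem_nhds hx)
        fun y hy => hR y s hy.le
    simp [deriv_deriv_eq_zero_of_eventuallyEq_const hzero]

lemma deriv_deriv_add_const_mul {f g : ℝ → ℝ} (hf : ContDiff ℝ 2 f) (hg : ContDiff ℝ 2 g)
    (c x : ℝ) :
    deriv (deriv fun y => f y + c * g y) x = deriv (deriv f) x + c * deriv (deriv g) x := by
  have hfirst : deriv (fun y => f y + c * g y) = fun y => deriv f y + c * deriv g y := by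
    funext y
    rw [deriv_fun_add (hf.differentiable (by norm_num) y)
      ((hg.differentiable (by norm_num) y).const_mul c),
      deriv_const_mul c (hg.differentiable (by norm_num) y)]
  rw [hfirst, deriv_fun_add (hf.differentiable_deriv_two x)
    ((hg.differentiable_deriv_two x).const_mul c),
    deriv_const_mul c (hg.differentiable_deriv_two x)]

lemma tendsto_exp_neg_inv_nhdsGT_zero :
    Tendsto (fun t : ℝ => Real.exp (-1 / t)) (𝓝[>] 0) (𝓝 0) :=
  (Real.tendsto_exp_atBot.comp (tendsto_neg_atTop_atBot.comp tendsto_inv_nhdsGT_zero)).congr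
    fun t => by simp [neg_div]

lemma exists_Ioc_forall_of_eventually_nhdsGT {p : ℝ → Prop} (h : ∀ᶠ t in 𝓝[>] 0, p t) :
    ∃ t₀ ∈ Ioc (0 : ℝ) 1, ∀ t ∈ Ioc 0 t₀, p t := by
  obtain ⟨u, hu, hp⟩ := (nhdsGT_basis (0 : ℝ)).eventually_iff.mp h
  refine ⟨min 1 (u / 2), ⟨by positivity, min_le_left _ _⟩, fun t ht => hp ⟨ht.1, ?_⟩⟩
  exact ht.2.trans_lt ((min_le_right _ _).trans_lt (half_lt_self hu))

/-- Appendix A of the paper: for the perturbed profile functions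
`f_t(x) = f(x) + exp(−1/t)·α(x, sin(1/t))`, there is `t₀ ∈ (0,1]` such that `f_t'' ≥ 0`
everywhere for all `t ∈ (0, t₀]`; hence the surfaces of revolution `M_{f_t}` are
nonpositively curved for all sufficiently small `t > 0`. -/
theorem swinging_neck_nonneg_second_deriv (δ : ℝ) (hδ : 0 < δ)
    (f : ℝ → ℝ) (hf : ContDiff ℝ 2 f)
    (hf1 : ∀ x ∈ Set.Icc (-1 : ℝ) 1, f x = 1)
    (hf2 : ∀ x : ℝ, 1 < |x| → 0 < deriv (deriv f) x)
    (hf3 : ∀ x : ℝ, 2 ≤ |x| → δ ≤ deriv (deriv f) x)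
    (α : ℝ → ℝ → ℝ) (hα : ContDiff ℝ 2 (fun p : ℝ × ℝ => α p.1 p.2))
    (hα1 : ∀ x s : ℝ, 4 ≤ |x| → α x s = 0)
    (hα2 : ∀ x s : ℝ, |x| ≤ 3 → |s| ≤ 1 → 0 < deriv (deriv (fun y => α y s)) x) :
    ∃ t₀ ∈ Set.Ioc (0 : ℝ) 1, ∀ t ∈ Set.Ioc (0 : ℝ) t₀, ∀ x : ℝ,
      0 ≤ deriv (deriv (fun y => f y + Real.exp (-1 / t) * α y (Real.sin (1 / t)))) x := by
  obtain ⟨M, hM⟩ := exists_abs_deriv_deriv_slice_le hα hα1 (isCompact_Icc (a := -1) (b := 1))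
  obtain ⟨t₀, ht₀, hsmall⟩ := exists_Ioc_forall_of_eventually_nhdsGT <|
    (tendsto_exp_neg_inv_nhdsGT_zero.mul_const M).eventually (gt_mem_nhds (by simpa using hδ))
  refine ⟨t₀, ht₀, fun t ht x => ?_⟩
  set c := Real.exp (-1 / t)
  set s := Real.sin (1 / t)
  have hs : s ∈ Icc (-1 : ℝ) 1 := ⟨Real.neg_one_le_sin _, Real.sin_le_one _⟩
  have hslice : ContDiff ℝ 2 fun y => α y s := hα.comp (contDiff_id.prodMk contDiff_const)
  rw [deriv_deriv_add_const_mul hf hslice]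
  rcases le_or_gt |x| 3 with hx3 | hx3
  · have hf'' : 0 ≤ deriv (deriv f) x := by
      rcases le_or_gt |x| 1 with hx1 | hx1
      · exact (eqOn_deriv_deriv_zero_of_eqOn_const hf (by norm_num) hf1 (abs_le.mp hx1)).ge
      · exact (hf2 x hx1).le
    exact add_nonneg hf'' (mul_pos (Real.exp_pos _) (hα2 x s hx3 (abs_le.mpr hs))).le
  · have hperturb : |c * deriv (deriv fun y => α y s) x| ≤ c * M := by
      rw [abs_mul, abs_of_pos (Real.exp_pos _)]
      exact mul_le_mul_of_nonneg_left (hM x s hs) (Real.exp_pos _).le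
    linarith [neg_abs_le (c * deriv (deriv fun y => α y s) x), hf3 x (by linarith), hsmall t ht]
end

section
/- Let f : ℝ → ℝ be a C² function with f(x) = 1 for all x ∈ [−1,1] and f''(x) > 0 for all x with |x| > 1. Let α : ℝ × ℝ → ℝ be a function with α(x,s) ≥ 0 for all x, s, and such that for every s ∈ [−1,1] and every x ∈ [−3,3], α(x,s) = 0 if and only if x = s. For t > 0 define f_t : ℝ → ℝ by f_t(x) = f(x) + exp(−1/t) · α(x, sin(1/t)). Then for every ε > 0 there is no continuous function c : [0, ε] → ℝ such that for every t ∈ (0, ε], c(t) is a minimizer of f_t, i.e. f_t(c(t)) ≤ f_t(x) for all x ∈ ℝ. -/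
/-!
A function `f` that is constant on `[-1, 1]` with `f'' > 0` outside it has `f' = 0` at `±1`, hence
`f' > 0` on `(1, ∞)` and `f' < 0` on `(-∞, -1)`, so `f` attains its minimum exactly on `[-1, 1]`.
As `α(·, s) ≥ 0` vanishes there only at `s`, the unique minimizer of `f_t` is `sin (1/t)`. A continuous
selection would then make `sin (1/t)` converge as `t → 0⁺`, i.e. `sin x` converge as `x → ∞`,
which is impossible for a nonconstant periodic function.
-/

open Set Filter Topology Real

theorem Function.Periodic.eq_of_tendsto_atTop {X : Type*} [TopologicalSpace X] [T2Space X]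
    {f : ℝ → X} {p : ℝ} {l : X} (hf : Function.Periodic f p) (hp : 0 < p)
    (h : Tendsto f atTop (𝓝 l)) (x : ℝ) : f x = l := by
  have hshift : Tendsto (fun n : ℕ => x + n * p) atTop atTop :=
    tendsto_atTop_add_const_left _ x (tendsto_natCast_atTop_atTop.atTop_mul_const hp)
  refine tendsto_nhds_unique tendsto_const_nhds ((h.comp hshift).congr fun n => ?_)
  exact (hf.nat_mul n) x

theorem Real.not_tendsto_sin_atTop (l : ℝ) : ¬ Tendsto sin atTop (𝓝 l) := fun h => by
  have h0 := sin_periodic.eq_of_tendsto_atTop two_pi_pos h 0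
  have h1 := sin_periodic.eq_of_tendsto_atTop two_pi_pos h (π / 2)
  rw [sin_zero] at h0
  rw [sin_pi_div_two] at h1
  exact one_ne_zero (h1.trans h0.symm)

theorem Real.not_tendsto_sin_one_div_nhdsGT_zero (l : ℝ) :
    ¬ Tendsto (fun t => sin (1 / t)) (𝓝[>] 0) (𝓝 l) := fun h =>
  not_tendsto_sin_atTop l <| by
    simpa only [Function.comp_def, one_div, inv_inv] using h.comp tendsto_inv_atTop_nhdsGT_zero

theorem not_continuousOn_Icc_of_eqOn_sin_one_div {c : ℝ → ℝ} {ε : ℝ} (hε : 0 < ε)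
    (hc : EqOn c (fun t => sin (1 / t)) (Ioc 0 ε)) : ¬ ContinuousOn c (Icc 0 ε) := by
  intro hcont
  have hlim : Tendsto c (𝓝[>] 0) (𝓝 (c 0)) :=
    ((hcont 0 ⟨le_rfl, hε.le⟩).mono_of_mem_nhdsWithin (Icc_mem_nhdsGT hε)).tendsto
  exact not_tendsto_sin_one_div_nhdsGT_zero (c 0)
    (hlim.congr' (eventuallyEq_of_mem (Ioc_mem_nhdsGT hε) hc))

section Profile

variable {f : ℝ → ℝ} {a b c : ℝ}

theorem deriv_eq_zero_of_eqOn_Icc (hab : a < b) (hc : ∀ x ∈ Icc a b, f x = c) {x : ℝ}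
    (hx : x ∈ Icc a b) (hd : DifferentiableAt ℝ f x) : deriv f x = 0 := by
  rw [← hd.derivWithin (uniqueDiffOn_Icc hab x hx), derivWithin_congr hc (hc x hx),
    derivWithin_fun_const, Pi.zero_apply]

theorem strictMonoOn_Ici_of_deriv_eq_zero (hf : Continuous f) (hf' : Continuous (deriv f))
    (h0 : deriv f a = 0) (h2 : ∀ x, a < x → 0 < deriv (deriv f) x) : StrictMonoOn f (Ici a) := by
  have hmono : StrictMonoOn (deriv f) (Ici a) :=
    strictMonoOn_of_deriv_pos (convex_Ici a) hf'.continuousOn fun x hx =>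
      h2 x (by rwa [interior_Ici] at hx)
  refine strictMonoOn_of_deriv_pos (convex_Ici a) hf.continuousOn fun x hx => ?_
  rw [interior_Ici] at hx
  simpa only [h0] using hmono self_mem_Ici (mem_Ici.2 (le_of_lt hx)) hx

theorem strictAntiOn_Iic_of_deriv_eq_zero (hf : Continuous f) (hf' : Continuous (deriv f))
    (h0 : deriv f a = 0) (h2 : ∀ x, x < a → 0 < deriv (deriv f) x) : StrictAntiOn f (Iic a) := by
  have hmono : StrictMonoOn (deriv f) (Iic a) :=
    strictMonoOn_of_deriv_pos (convex_Iic a) hf'.continuousOn fun x hx =>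
      h2 x (by rwa [interior_Iic] at hx)
  refine strictAntiOn_of_deriv_neg (convex_Iic a) hf.continuousOn fun x hx => ?_
  rw [interior_Iic] at hx
  simpa only [h0] using hmono (mem_Iic.2 (le_of_lt hx)) self_mem_Iic hx

theorem lt_of_eqOn_Icc_of_deriv_deriv_pos (hf : ContDiff ℝ 2 f) (hab : a < b)
    (hc : ∀ x ∈ Icc a b, f x = c) (h2 : ∀ x ∉ Icc a b, 0 < deriv (deriv f) x) {x : ℝ}
    (hx : x ∉ Icc a b) : c < f x := by
  have hf' : Continuous (deriv f) := hf.continuous_deriv one_le_two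
  have hd : ∀ y ∈ Icc a b, deriv f y = 0 := fun y hy =>
    deriv_eq_zero_of_eqOn_Icc hab hc hy (hf.differentiable two_ne_zero y)
  have ha : a ∈ Icc a b := left_mem_Icc.2 hab.le
  have hb : b ∈ Icc a b := right_mem_Icc.2 hab.le
  rcases not_and_or.1 (mem_Icc.not.1 hx) with hxa | hxb
  · have hxa : x < a := not_le.1 hxa
    have := strictAntiOn_Iic_of_deriv_eq_zero hf.continuous hf' (hd a ha)
      (fun y hy => h2 y fun hy' => hy.not_ge hy'.1) hxa.le self_mem_Iic hxa
    rwa [hc a ha] at this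
  · have hbx : b < x := not_le.1 hxb
    have := strictMonoOn_Ici_of_deriv_eq_zero hf.continuous hf' (hd b hb)
      (fun y hy => h2 y fun hy' => hy.not_ge hy'.2) self_mem_Ici hbx.le hbx
    rwa [hc b hb] at this

end Profile

theorem eq_of_add_mul_le_add_mul {X : Type*} {f g : X → ℝ} {K : Set X} {m l : ℝ} {s y : X}
    (hl : 0 < l) (hfK : ∀ x ∈ K, f x = m) (hf : ∀ x ∉ K, m < f x) (hg : ∀ x, 0 ≤ g x)
    (hgK : ∀ x ∈ K, g x = 0 ↔ x = s) (hs : s ∈ K) (h : f y + l * g y ≤ f s + l * g s) :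
    y = s := by
  rw [hfK s hs, (hgK s hs).2 rfl, mul_zero, add_zero] at h
  have hly : 0 ≤ l * g y := mul_nonneg hl.le (hg y)
  have hy : y ∈ K := by
    by_contra hy
    linarith [hf y hy]
  rw [hfK y hy] at h
  exact (hgK y hy).1 (le_antisymm (nonpos_of_mul_nonpos_right (by linarith) hl) (hg y))

/-- Appendix A of the paper ('the swinging neck'): since the perturbed profile function
`f_t(x) = f(x) + exp(−1/t)·α(x, sin(1/t))` attains its minimum at the unique point
`sin(1/t)`, which oscillates faster and faster as `t → 0⁺`, there is no continuous
selection of minimizers of `f_t` on any interval `[0, ε]`. -/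
theorem swinging_neck_no_continuous_minimizer
    (f : ℝ → ℝ) (hf : ContDiff ℝ 2 f)
    (hf1 : ∀ x ∈ Set.Icc (-1 : ℝ) 1, f x = 1)
    (hf2 : ∀ x : ℝ, 1 < |x| → 0 < deriv (deriv f) x)
    (α : ℝ → ℝ → ℝ)
    (hα0 : ∀ x s : ℝ, 0 ≤ α x s)
    (hα1 : ∀ s ∈ Set.Icc (-1 : ℝ) 1, ∀ x ∈ Set.Icc (-3 : ℝ) 3, (α x s = 0 ↔ x = s)) :
    ∀ ε : ℝ, 0 < ε →
      ¬ ∃ c : ℝ → ℝ, ContinuousOn c (Set.Icc (0 : ℝ) ε) ∧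
        ∀ t ∈ Set.Ioc (0 : ℝ) ε, ∀ x : ℝ,
          f (c t) + Real.exp (-1 / t) * α (c t) (Real.sin (1 / t)) ≤
            f x + Real.exp (-1 / t) * α x (Real.sin (1 / t)) := by
  rintro ε hε ⟨c, hc, hmin⟩
  have hIcc : ∀ x : ℝ, x ∉ Icc (-1 : ℝ) 1 ↔ 1 < |x| := fun x => by
    rw [mem_Icc, ← abs_le, not_le]
  have hgt : ∀ x ∉ Icc (-1 : ℝ) 1, 1 < f x := fun x =>
    lt_of_eqOn_Icc_of_deriv_deriv_pos hf (by norm_num) hf1 fun y hy => hf2 y ((hIcc y).1 hy)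
  refine not_continuousOn_Icc_of_eqOn_sin_one_div hε (fun t ht => ?_) hc
  have hs : sin (1 / t) ∈ Icc (-1 : ℝ) 1 := ⟨neg_one_le_sin _, sin_le_one _⟩
  have hsub : Icc (-1 : ℝ) 1 ⊆ Icc (-3) 3 := Icc_subset_Icc (by norm_num) (by norm_num)
  exact eq_of_add_mul_le_add_mul (exp_pos _) hf1 hgt (fun x => hα0 x _)
    (fun x hx => hα1 _ hs x (hsub hx)) hs (hmin t ht _)
end
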